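/- For every linear functional ψ : H → k and every y ∈ H one has Σ ψ(h₍₁₎)·φ(h₍₂₎·y) = n·ψ(S(y)). (This is the identity F∘F = S for the Fourier transform on the dual Hopf algebra H*: the Fourier transform of H applied to Σ ψ(h₍₁₎)·h₍₂₎ returns ψ∘S.) -/

import Mathlib

/-!
For a right integral `h` one has `Δh · (z ⊗ 1) = Δh · (1 ⊗ S z)`: write `z ⊗ 1 = Σ Δ(z₁)(1 ⊗ S z₂)`
and absorb `Δ(z₁)` into `Δh` using `h z₁ = ε(z₁) h`. Taking `z = S y` and using `S² = id`, the
right multiplication by `y` on the second leg of `Δh` becomes a right multiplication by `S y` on the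
first leg, after which the right integral property of `φ` collapses `Σ h₁ φ(h₂)` to `φ(h) · 1`.
-/

open TensorProduct Coalgebra HopfAlgebra

namespace HopfAlgebra

variable {R A : Type*} [CommSemiring R] [Semiring A] [HopfAlgebra R A]

theorem sum_comul_mul_one_tmul_antipode {ι : Type*} {z : A} (𝓡 : Repr R z ι) :
    ∑ i ∈ 𝓡.index, comul (R := R) (𝓡.left i) * (1 ⊗ₜ[R] antipode R (𝓡.right i)) =
      z ⊗ₜ[R] 1 := by
  have coassoc := congr((LinearMap.mul' R A ∘ₗ (antipode R).lTensor A).lTensor A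
    $(sum_tmul_tmul_eq 𝓡 (fun i ↦ ℛ R (𝓡.left i)) (fun i ↦ ℛ R (𝓡.right i))))
  simp only [map_sum, LinearMap.lTensor_tmul, LinearMap.comp_apply, LinearMap.mul'_apply,
    ← tmul_sum, sum_mul_antipode_eq_algebraMap_counit] at coassoc
  have counit_right :
      ∑ i ∈ 𝓡.index, 𝓡.left i ⊗ₜ[R] algebraMap R A (counit (𝓡.right i)) = z ⊗ₜ[R] 1 := by
    simpa only [map_sum, LinearMap.lTensor_tmul, Algebra.linearMap_apply, map_one]
      using congr((Algebra.linearMap R A).lTensor A $(sum_tmul_counit_eq 𝓡))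
  rw [← counit_right, ← coassoc]
  refine Finset.sum_congr rfl fun i _ ↦ ?_
  rw [← (ℛ R (𝓡.left i)).eq, Finset.sum_mul]
  simp only [Algebra.TensorProduct.tmul_mul_tmul, mul_one]

theorem comul_mul_tmul_one_eq_comul_mul_one_tmul_antipode {h : A}
    (hh : ∀ x, h * x = counit (R := R) x • h) (z : A) :
    comul (R := R) h * (z ⊗ₜ[R] 1) = comul (R := R) h * (1 ⊗ₜ[R] antipode R z) := by
  let 𝓡 := ℛ R z
  calc comul (R := R) h * (z ⊗ₜ[R] 1)
      = ∑ i ∈ 𝓡.index, comul (R := R) (h * 𝓡.left i) * (1 ⊗ₜ[R] antipode R (𝓡.right i)) := by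
        simp only [← sum_comul_mul_one_tmul_antipode 𝓡, Finset.mul_sum, Bialgebra.comul_mul,
          mul_assoc]
    _ = ∑ i ∈ 𝓡.index,
          counit (R := R) (𝓡.left i) • (comul (R := R) h * (1 ⊗ₜ[R] antipode R (𝓡.right i))) := by
        simp only [hh, map_smul, smul_mul_assoc]
    _ = comul (R := R) h * (1 ⊗ₜ[R] antipode R z) := by
        simp only [← mul_smul_comm, ← Finset.mul_sum, ← tmul_smul, ← map_smul, ← tmul_sum,
          ← map_sum, sum_counit_smul]

end HopfAlgebra

section

variable {R A B : Type*} [CommSemiring R] [Semiring A] [Semiring B] [Algebra R A] [Algebra R B]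

theorem LinearMap.lTensor_mulRight_apply (b : B) (u : A ⊗[R] B) :
    (LinearMap.mulRight R b).lTensor A u = u * (1 ⊗ₜ b) := by
  rw [← LinearMap.mulRight_apply (R := R), LinearMap.mulRight_tmul, LinearMap.mulRight_one]
  rfl

theorem LinearMap.rTensor_mulRight_apply (a : A) (u : A ⊗[R] B) :
    (LinearMap.mulRight R a).rTensor B u = u * (a ⊗ₜ 1) := by
  rw [← LinearMap.mulRight_apply (R := R), LinearMap.mulRight_tmul, LinearMap.mulRight_one]
  rfl

end

theorem TensorProduct.lid_map_eq_apply_rid_lTensor {R M N : Type*} [CommSemiring R]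
    [AddCommMonoid M] [AddCommMonoid N] [Module R M] [Module R N]
    (f : M →ₗ[R] R) (g : N →ₗ[R] R) (u : M ⊗[R] N) :
    TensorProduct.lid R R (map f g u) = f (TensorProduct.rid R M (g.lTensor M u)) := by
  induction u using TensorProduct.induction_on with
  | zero => simp
  | tmul m n => simp [mul_comm]
  | add u v hu hv => simp only [map_add, hu, hv]

theorem dual_fourier_squared_eq_antipode_general
    {k : Type*} [Field k] {H : Type*} [Ring H] [HopfAlgebra k H]
    (n : k)
    (h : H)
    (hInt' : ∀ x : H, h * x = counit (R := k) x • h)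
    (φ : H →ₗ[k] k)
    (hφInt' : ∀ x : H, TensorProduct.rid k H (LinearMap.lTensor H φ (comul x)) = φ x • 1)
    (hSS : ∀ x : H, antipode (R := k) (antipode (R := k) x) = x)
    (hφh : φ h = n)
    :
    ∀ (ψ : Module.Dual k H) (y : H),
      TensorProduct.lid k k
        (TensorProduct.map ψ (φ ∘ₗ LinearMap.mulRight k y) (comul h))
        = n * ψ (antipode (R := k) y) := by
  intro ψ y
  have move_y : comul (R := k) h * (1 ⊗ₜ y) = comul (R := k) h * (antipode k y ⊗ₜ 1) := by
    rw [comul_mul_tmul_one_eq_comul_mul_one_tmul_antipode hInt', hSS]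
  calc TensorProduct.lid k k (map ψ (φ ∘ₗ LinearMap.mulRight k y) (comul h))
      = TensorProduct.lid k k (map ψ φ (comul (R := k) h * (1 ⊗ₜ y))) := by
        rw [← LinearMap.lTensor_mulRight_apply, LinearMap.map_lTensor]
    _ = TensorProduct.lid k k (map (ψ ∘ₗ LinearMap.mulRight k (antipode k y)) φ (comul h)) := by
        rw [move_y, ← LinearMap.rTensor_mulRight_apply, LinearMap.map_rTensor]
    _ = ψ ((φ h • 1) * antipode k y) := by
        rw [TensorProduct.lid_map_eq_apply_rid_lTensor, hφInt']
        rfl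
    _ = n * ψ (antipode k y) := by
        rw [hφh, smul_mul_assoc, one_mul, map_smul, smul_eq_mul]

/-- For every linear functional `ψ : H → k` and every `y ∈ H` one has
`Σ ψ(h₍₁₎)·φ(h₍₂₎·y) = n·ψ(S(y))` (the identity `F∘F = S` for the Fourier transform on the
dual Hopf algebra). -/
theorem dual_fourier_squared_eq_antipode
    {k : Type*} [Field k] {H : Type*} [Ring H] [HopfAlgebra k H]
    [FiniteDimensional k H]
    (n : k) (hn : n = (Module.finrank k H : k)) (hn0 : n ≠ 0)
    (h : H)
    (hInt : ∀ x : H, x * h = counit (R := k) x • h)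
    (hInt' : ∀ x : H, h * x = counit (R := k) x • h)
    (hεh : counit (R := k) h = n)
    (φ : H →ₗ[k] k)
    (hφInt : ∀ x : H, TensorProduct.lid k H (LinearMap.rTensor H φ (comul x)) = φ x • 1)
    (hφInt' : ∀ x : H, TensorProduct.rid k H (LinearMap.lTensor H φ (comul x)) = φ x • 1)
    (hφ1 : φ 1 = n)
    (hSS : ∀ x : H, antipode (R := k) (antipode (R := k) x) = x)
    (hSh : antipode (R := k) h = h)
    (hφS : ∀ x : H, φ (antipode (R := k) x) = φ x)
    (hφh : φ h = n)
    (hφtr : ∀ x y : H, φ (x * y) = φ (y * x))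
    :
    ∀ (ψ : Module.Dual k H) (y : H),
      TensorProduct.lid k k
        (TensorProduct.map ψ (φ ∘ₗ LinearMap.mulRight k y) (comul h))
        = n * ψ (antipode (R := k) y) :=
  dual_fourier_squared_eq_antipode_general n h hInt' φ hφInt' hSS hφh
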